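/- Let M be a standard n×n integer matrix and σ a permutation of {1,…,n}. If σ(M) is also standard, then σ is the identity permutation. -/

import Mathlib

open Matrix

/-- The vector `β_{ij} ∈ ℤⁿ` (for `0 ≤ i < j ≤ n`): coordinates `i+1,…,j` (1-based),
i.e. 0-based coordinates `i,…,j-1`, equal 1, all others 0. -/
def beta (n i j : ℕ) : Fin n → ℤ := fun v => if i ≤ v.val ∧ v.val < j then 1 else 0

/-- Exchange matrix of the quiver `A_n` with straight orientation `1 → 2 → ⋯ → n`. -/
def B0 (n : ℕ) : Matrix (Fin n) (Fin n) ℤ := fun u v =>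
  if v.val = u.val + 1 then 1 else if u.val = v.val + 1 then -1 else 0

/-- Mutation of the exchange matrix `B` in direction `k`. -/
def mutateB (n : ℕ) (k : Fin n) (B : Matrix (Fin n) (Fin n) ℤ) :
    Matrix (Fin n) (Fin n) ℤ := fun u v =>
  if u = k ∨ v = k then -B u v
  else B u v + Int.sign (B u k) * max (B u k * B k v) 0

/-- Mutation of the `c`-matrix `C` in direction `k` (relative to `B`). -/
def mutateC (n : ℕ) (k : Fin n) (B C : Matrix (Fin n) (Fin n) ℤ) :
    Matrix (Fin n) (Fin n) ℤ := fun u v =>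
  if u = k then -C u v
  else C u v + Int.sign (B u k) * max (B u k * C k v) 0

/-- Mutation `μ_k(B, C)` of an extended exchange pair. -/
def mutate (n : ℕ) (k : Fin n)
    (p : Matrix (Fin n) (Fin n) ℤ × Matrix (Fin n) (Fin n) ℤ) :
    Matrix (Fin n) (Fin n) ℤ × Matrix (Fin n) (Fin n) ℤ :=
  (mutateB n k p.1, mutateC n k p.1 p.2)

/-- `(B, C)` is reachable from `(B₀, Iₙ)` by a finite sequence of mutations. -/
def Reachable (n : ℕ) (B C : Matrix (Fin n) (Fin n) ℤ) : Prop :=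
  ∃ L : List (Fin n), L.foldl (fun p k => mutate n k p) (B0 n, 1) = (B, C)

/-- `σ(M)`: the matrix whose `m`-th row is the `σ⁻¹(m)`-th row of `M`. -/
def rowPerm (n : ℕ) (σ : Equiv.Perm (Fin n)) (M : Matrix (Fin n) (Fin n) ℤ) :
    Matrix (Fin n) (Fin n) ℤ := fun u v => M (σ⁻¹ u) v

/-- A matrix is standard if (1) its diagonal entries are nonzero, (2) positive entries
lie on or above the diagonal and negative entries on or below it, and (3) every row
is `β_{ij}` or `-β_{ij}` for some `0 ≤ i < j ≤ n`. -/
def IsStandard (n : ℕ) (M : Matrix (Fin n) (Fin n) ℤ) : Prop :=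
  (∀ u, M u u ≠ 0) ∧
  (∀ u v, 0 < M u v → u ≤ v) ∧
  (∀ u v, M u v < 0 → v ≤ u) ∧
  (∀ u, ∃ i j, i < j ∧ j ≤ n ∧ (M u = beta n i j ∨ M u = -beta n i j))

/-- The transposition `(i+1, j)` of `{1,…,n}`, written 0-based as the swap of
`i` and `j-1` in `Fin n` (the identity if the indices are out of range). -/
def transp (n i j : ℕ) : Equiv.Perm (Fin n) :=
  if h : i < n ∧ j - 1 < n then Equiv.swap ⟨i, h.1⟩ ⟨j - 1, h.2⟩ else 1

lemma beta_apply_ne_zero_iff {n i j : ℕ} {v : Fin n} :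
    beta n i j v ≠ 0 ↔ i ≤ v.val ∧ v.val < j := by
  unfold beta; split_ifs <;> simp_all

namespace IsStandard

variable {n : ℕ} {M N : Matrix (Fin n) (Fin n) ℤ} {u w : Fin n} {i j : ℕ}

/-- The diagonal entry puts `u` in `[i, j)`, and the entry `1` in column `i` forces `u ≤ i`. -/
lemma val_eq_of_row_eq_beta (hM : IsStandard n M) (h : M u = beta n i j) : u.val = i := by
  have hu : i ≤ u.val ∧ u.val < j := beta_apply_ne_zero_iff.mp (h ▸ hM.1 u)
  have hi : i < n := by omega
  have hpos : 0 < M u ⟨i, hi⟩ := by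
    rw [h, beta, if_pos (show i ≤ i ∧ i < j by omega)]
    exact one_pos
  have : u.val ≤ i := hM.2.1 u _ hpos
  omega

/-- The diagonal entry puts `u` in `[i, j)`, and the entry `-1` in column `j - 1` forces
`j - 1 ≤ u`. -/
lemma val_add_one_eq_of_row_eq_neg_beta (hM : IsStandard n M) (hj : j ≤ n)
    (h : M u = -beta n i j) : u.val + 1 = j := by
  have hu : i ≤ u.val ∧ u.val < j :=
    beta_apply_ne_zero_iff.mp (neg_ne_zero.mp (congrFun h u ▸ hM.1 u :))
  have hneg : M u ⟨j - 1, by omega⟩ < 0 := by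
    rw [h, Pi.neg_apply, neg_neg_iff_pos, beta, if_pos (show i ≤ j - 1 ∧ j - 1 < j by omega)]
    exact one_pos
  have : j - 1 ≤ u.val := hM.2.2.1 u _ hneg
  omega

lemma eq_of_row_eq (hM : IsStandard n M) (hN : IsStandard n N) (h : M u = N w) : u = w := by
  obtain ⟨i, j, -, hj, hrow | hrow⟩ := hM.2.2.2 u
  · exact Fin.ext <| (hM.val_eq_of_row_eq_beta hrow).trans
      (hN.val_eq_of_row_eq_beta (h ▸ hrow)).symm
  · have hu := hM.val_add_one_eq_of_row_eq_neg_beta hj hrow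
    have hw := hN.val_add_one_eq_of_row_eq_neg_beta hj (h ▸ hrow)
    exact Fin.ext (by omega)

end IsStandard

/-- the only row permutation of a standard matrix yielding a
standard matrix is the identity. -/
theorem standard_rowPerm_eq_one (n : ℕ) (M : Matrix (Fin n) (Fin n) ℤ)
    (σ : Equiv.Perm (Fin n))
    (hM : IsStandard n M) (hσM : IsStandard n (rowPerm n σ M)) :
    σ = 1 := by
  have hfix (u : Fin n) : σ⁻¹ u = u := hM.eq_of_row_eq hσM rfl
  exact inv_eq_one.mp (Equiv.ext hfix)
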